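/- arXiv:1911.06457 — 6 statements merged into one kernel-verified Lean document; each statement's English description precedes it below -/
import Mathlib

section
/- Let (B_w, ‖·‖_w) and (B_s, ‖·‖_s) be Banach spaces with B_s ⊆ B_w, and let L : B_w → B_w be a bounded linear operator with L(B_s) ⊆ B_s. Suppose there exists a bounded projection P : B_w → B_w¹ ⊆ B_s (bounded both as an operator on B_w and from B_w to B_s) with L(B_w¹) ⊆ B_w¹, and suppose there exist Q ≥ 0 and 0 ≤ q < 1 such that ‖Lⁿ g‖_s ≤ Q qⁿ ‖g‖_s for all n ∈ ℕ and all g ∈ B_s with P g = 0. Then there exist N ∈ ℕ, r < 1 and R ∈ ℝ such that ‖L^N g‖_s ≤ r ‖g‖_s + R ‖g‖_w for all g ∈ B_s. -/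
/-- Lemma 2.4: if `L` contracts exponentially on the kernel of a bounded
projection `P` whose range lies in `B_s` and is `L`-invariant, then some iterate of `L`
satisfies a Lasota–Yorke inequality on `B_s`.

`Bs` is included in `Bw` via the injective linear map `ι`; `Ls` is the restriction of `L`
to `Bs`; `Ps` is the lift of `P` to `Bs` (so the range of `P` lies in `Bs`), bounded from
`Bw` to `Bs`. -/
theorem stmt0 {Bw Bs : Type*}
    [NormedAddCommGroup Bw] [NormedSpace ℝ Bw] [CompleteSpace Bw]
    [NormedAddCommGroup Bs] [NormedSpace ℝ Bs] [CompleteSpace Bs]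
    (ι : Bs →ₗ[ℝ] Bw) (hι : Function.Injective ι)
    (L : Bw →L[ℝ] Bw)
    (Ls : Bs →ₗ[ℝ] Bs) (hLs : ∀ g, ι (Ls g) = L (ι g))
    (P : Bw →L[ℝ] Bw) (hPproj : ∀ x, P (P x) = P x)
    (Ps : Bw →ₗ[ℝ] Bs) (hPs : ∀ x, ι (Ps x) = P x)
    (Cps : ℝ) (hPsb : ∀ x, ‖Ps x‖ ≤ Cps * ‖x‖)
    (hLP : ∀ x, P (L (P x)) = L (P x))
    (Q q : ℝ) (hQ : 0 ≤ Q) (hq0 : 0 ≤ q) (hq1 : q < 1)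
    (hcontr : ∀ (n : ℕ) (g : Bs), P (ι g) = 0 → ‖(Ls ^ n) g‖ ≤ Q * q ^ n * ‖g‖) :
    ∃ (N : ℕ) (r R : ℝ), r < 1 ∧ ∀ g : Bs, ‖(Ls ^ N) g‖ ≤ r * ‖g‖ + R * ‖ι g‖ := by
  -- iterate identities
  have hLsn : ∀ (n : ℕ) (g : Bs), ι ((Ls ^ n) g) = (L ^ n) (ι g) := by
    intro n
    induction n with
    | zero => intro g; simp
    | succ n ih =>
      intro g
      rw [pow_succ, pow_succ]
      simp only [Module.End.mul_apply, ContinuousLinearMap.mul_apply]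
      rw [ih, hLs]
  have hPLn : ∀ (n : ℕ) (x : Bw), P ((L ^ n) (P x)) = (L ^ n) (P x) := by
    intro n
    induction n with
    | zero => intro x; simpa using hPproj x
    | succ n ih =>
      intro x
      rw [pow_succ]
      simp only [ContinuousLinearMap.mul_apply]
      have := hLP (P x)
      rw [hPproj] at this
      calc P ((L ^ n) (L (P x))) = P ((L ^ n) (P (L (P x)))) := by rw [this]
        _ = (L ^ n) (P (L (P x))) := ih _
        _ = (L ^ n) (L (P x)) := by rw [this]
  have hLnb : ∀ (n : ℕ) (x : Bw), ‖(L ^ n) x‖ ≤ ‖L‖ ^ n * ‖x‖ := by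
    intro n
    induction n with
    | zero => intro x; simp
    | succ n ih =>
      intro x
      rw [pow_succ', pow_succ']
      simp only [ContinuousLinearMap.mul_apply]
      calc ‖L ((L ^ n) x)‖ ≤ ‖L‖ * ‖(L ^ n) x‖ := L.le_opNorm _
        _ ≤ ‖L‖ * (‖L‖ ^ n * ‖x‖) := by
            exact mul_le_mul_of_nonneg_left (ih x) (norm_nonneg L)
        _ = ‖L‖ * ‖L‖ ^ n * ‖x‖ := by ring
  set C : ℝ := max Cps 0 with hC
  have hCnn : 0 ≤ C := le_max_right _ _
  have hPsb' : ∀ x, ‖Ps x‖ ≤ C * ‖x‖ := fun x =>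
    le_trans (hPsb x) (mul_le_mul_of_nonneg_right (le_max_left _ _) (norm_nonneg x))
  -- choose N with Q * q ^ N < 1
  obtain ⟨N, hN⟩ : ∃ N : ℕ, q ^ N < 1 / (Q + 1) := by
    refine exists_pow_lt_of_lt_one (by positivity) hq1
  have hrlt : Q * q ^ N < 1 := by
    have h1 : Q * q ^ N ≤ (Q + 1) * q ^ N := by
      apply mul_le_mul_of_nonneg_right (by linarith) (by positivity)
    have h2 : (Q + 1) * q ^ N < (Q + 1) * (1 / (Q + 1)) := by
      apply mul_lt_mul_of_pos_left hN (by positivity)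
    have h3 : (Q + 1) * (1 / (Q + 1)) = 1 := by
      field_simp
    linarith
  refine ⟨N, Q * q ^ N, Q * q ^ N * C + C * (‖L‖ ^ N * ‖P‖), hrlt, ?_⟩
  intro g
  set g0 : Bs := g - Ps (ι g) with hg0
  have hker : P (ι g0) = 0 := by
    rw [hg0]
    simp only [map_sub, hPs]
    rw [hPproj, sub_self]
  have hg0n : ‖(Ls ^ N) g0‖ ≤ Q * q ^ N * ‖g0‖ := hcontr N g0 hker
  -- the projection part
  have hproj_eq : (Ls ^ N) (Ps (ι g)) = Ps ((L ^ N) (P (ι g))) := by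
    apply hι
    rw [hLsn, hPs, hPs, hPLn]
  have hprojn : ‖(Ls ^ N) (Ps (ι g))‖ ≤ C * (‖L‖ ^ N * ‖P‖) * ‖ι g‖ := by
    rw [hproj_eq]
    calc ‖Ps ((L ^ N) (P (ι g)))‖ ≤ C * ‖(L ^ N) (P (ι g))‖ := hPsb' _
      _ ≤ C * (‖L‖ ^ N * ‖P (ι g)‖) :=
          mul_le_mul_of_nonneg_left (hLnb N _) hCnn
      _ ≤ C * (‖L‖ ^ N * (‖P‖ * ‖ι g‖)) := by
          have := P.le_opNorm (ι g)
          have h2 : ‖L‖ ^ N * ‖P (ι g)‖ ≤ ‖L‖ ^ N * (‖P‖ * ‖ι g‖) :=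
            mul_le_mul_of_nonneg_left this (by positivity)
          exact mul_le_mul_of_nonneg_left h2 hCnn
      _ = C * (‖L‖ ^ N * ‖P‖) * ‖ι g‖ := by ring
  have hsplit : (Ls ^ N) g = (Ls ^ N) g0 + (Ls ^ N) (Ps (ι g)) := by
    rw [hg0, map_sub, sub_add_cancel]
  have hg0bound : ‖g0‖ ≤ ‖g‖ + C * ‖ι g‖ := by
    calc ‖g0‖ ≤ ‖g‖ + ‖Ps (ι g)‖ := norm_sub_le _ _
      _ ≤ ‖g‖ + C * ‖ι g‖ := by linarith [hPsb' (ι g)]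
  have hQq : 0 ≤ Q * q ^ N := by positivity
  calc ‖(Ls ^ N) g‖ ≤ ‖(Ls ^ N) g0‖ + ‖(Ls ^ N) (Ps (ι g))‖ := by
        rw [hsplit]; exact norm_add_le _ _
    _ ≤ Q * q ^ N * ‖g0‖ + C * (‖L‖ ^ N * ‖P‖) * ‖ι g‖ := by linarith
    _ ≤ Q * q ^ N * (‖g‖ + C * ‖ι g‖) + C * (‖L‖ ^ N * ‖P‖) * ‖ι g‖ := by
        have := mul_le_mul_of_nonneg_left hg0bound hQq
        linarith
    _ = Q * q ^ N * ‖g‖ + (Q * q ^ N * C + C * (‖L‖ ^ N * ‖P‖)) * ‖ι g‖ := by ring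
end

section
/- Let (B_w, ‖·‖_w) and (B_s, ‖·‖_s) be Banach spaces with a bounded inclusion ι : B_s → B_w, and let L : B_w → B_w be a bounded linear operator with L(B_s) ⊆ B_s and sup_{n∈ℕ} ‖Lⁿ‖_w < ∞. Assume there is a decomposition B_w = B_w⁰ ⊕ B_w¹ into L-invariant subspaces such that ‖Lⁿ restricted to B_s ∩ B_w⁰‖_s ≤ Q qⁿ for some Q ≥ 0 and 0 ≤ q < 1, L restricted to B_w¹ is diagonalizable with all eigenvalues of modulus 1, B_w¹ ⊆ B_s, and dim B_w¹ < ∞. Then there exist N ∈ ℕ, r < 1 and R ∈ ℝ such that ‖L^N g‖_s ≤ r ‖g‖_s + R ‖g‖_w for all g ∈ B_s. -/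
/-!
Real eigenvalues of modulus one are `±1`, so `L ^ 2` fixes `Bw¹` pointwise. Write
`g = g₀ + g₁`, where `g₁` is the lift to `Bs` of the `Bw¹`-component `x` of `ι g`. Although `Bw⁰`
need not be closed, `x` is controlled in the weak norm: `L ^ (2n) (ι g) = ι (Ls ^ (2n) g₀) + x`,
and the first term tends to `0`, so `‖x‖ ≤ C ‖ι g‖`. As `Bw¹` is finite-dimensional, the lift and
`Ls ^ N` composed with it are bounded in terms of `‖x‖`, while `Ls ^ N` contracts `g₀` by
`Q q ^ N < 1`.
-/

open Filter Topology

lemma LinearMap.exists_lift_of_le_range {K E F : Type*} [Field K] [AddCommGroup E] [Module K E]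
    [AddCommGroup F] [Module K F] (ι : F →ₗ[K] E) {W : Submodule K E}
    (hW : W ≤ LinearMap.range ι) : ∃ σ : W →ₗ[K] F, ∀ x, ι (σ x) = x := by
  let f : W.comap ι →ₗ[K] W := ι.restrict fun _ hx => hx
  have hf : LinearMap.range f = ⊤ := by
    refine LinearMap.range_eq_top.2 fun x => ?_
    obtain ⟨y, hy⟩ := hW x.2
    exact ⟨⟨y, by simp [hy]⟩, Subtype.ext hy⟩
  obtain ⟨g, hg⟩ := f.exists_rightInverse_of_surjective hf
  exact ⟨(W.comap ι).subtype ∘ₗ g, fun x => congr_arg Subtype.val (LinearMap.congr_fun hg x)⟩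

lemma ContinuousLinearMap.sq_apply_eq_self_of_abs_eigenvalue_eq_one {E ι : Type*}
    [NormedAddCommGroup E] [NormedSpace ℝ E] (L : E →L[ℝ] E) (v : ι → E)
    (heig : ∀ i, ∃ c : ℝ, |c| = 1 ∧ L (v i) = c • v i) :
    ∀ x ∈ Submodule.span ℝ (Set.range v), (L ^ 2) x = x := by
  have : Set.EqOn ((L ^ 2 : E →L[ℝ] E) : E →ₗ[ℝ] E) (LinearMap.id : E →ₗ[ℝ] E) (Set.range v) := by
    rintro _ ⟨i, rfl⟩
    obtain ⟨c, hc, hv⟩ := heig i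
    have hcc : c * c = 1 := by rw [← abs_mul_abs_self, hc, one_mul]
    simp [pow_two, hv, smul_smul, hcc]
  exact fun x hx => LinearMap.eqOn_span this hx

lemma ContinuousLinearMap.norm_le_of_tendsto_pow_apply_sub {E : Type*}
    [SeminormedAddCommGroup E] [NormedSpace ℝ E] (T : E →L[ℝ] E) {C : ℝ}
    (hC : ∀ n : ℕ, ‖T ^ n‖ ≤ C) {x y : E} (hx : T x = x)
    (hy : Tendsto (fun n : ℕ => (T ^ n) (y - x)) atTop (𝓝 0)) : ‖x‖ ≤ C * ‖y‖ := by
  have hfix (n : ℕ) : (T ^ n) x = x := by rw [FunLike.coe_pow_eq_iterate, Function.iterate_fixed hx]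
  have hlim : Tendsto (fun n : ℕ => (T ^ n) y) atTop (𝓝 x) := by
    simpa [map_sub, hfix] using hy.add_const x
  refine le_of_tendsto' hlim.norm fun n => ?_
  exact ((T ^ n).le_opNorm y).trans (mul_le_mul_of_nonneg_right (hC n) (norm_nonneg y))

lemma norm_le_of_sub_mem_of_contracting {Bw Bs : Type*}
    [NormedAddCommGroup Bw] [NormedSpace ℝ Bw] [NormedAddCommGroup Bs] [NormedSpace ℝ Bs]
    (ι : Bs →L[ℝ] Bw) (L : Bw →L[ℝ] Bw) (Ls : Bs →ₗ[ℝ] Bs) (hLs : ∀ g, ι (Ls g) = L (ι g))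
    {C : ℝ} (hC : ∀ n : ℕ, ‖L ^ n‖ ≤ C) {W0 : Submodule ℝ Bw} {Q q : ℝ} (hq0 : 0 ≤ q)
    (hq1 : q < 1) (hcontr : ∀ (n : ℕ) (g : Bs), ι g ∈ W0 → ‖(Ls ^ n) g‖ ≤ Q * q ^ n * ‖g‖)
    {g g₁ : Bs} (hg : ι (g - g₁) ∈ W0) (hg₁ : (L ^ 2) (ι g₁) = ι g₁) :
    ‖ι g₁‖ ≤ C * ‖ι g‖ := by
  have hdecay : Tendsto (fun n => (Ls ^ n) (g - g₁)) atTop (𝓝 0) :=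
    squeeze_zero_norm (fun n => hcontr n _ hg) <| by
      simpa using ((tendsto_pow_atTop_nhds_zero_of_lt_one hq0 hq1).const_mul Q).mul_const _
  have hsemiconj (n : ℕ) (g : Bs) : ι ((Ls ^ n) g) = (L ^ n) (ι g) := by
    rw [Module.End.coe_pow, FunLike.coe_pow_eq_iterate]
    exact (Function.Semiconj.iterate_right hLs n) g
  refine (L ^ 2).norm_le_of_tendsto_pow_apply_sub (fun n => by rw [← pow_mul]; exact hC _) hg₁ ?_
  have := (ι.continuous.tendsto 0).comp (hdecay.comp (tendsto_id.const_mul_atTop' two_pos))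
  simpa [Function.comp_def, ← pow_mul, hsemiconj] using this

lemma LinearMap.norm_apply_le_of_sub_of_le {F : Type*} [SeminormedAddCommGroup F]
    [Module ℝ F] (T : F →ₗ[ℝ] F) {r K K' a : ℝ} (hr : 0 ≤ r) {g g₁ : F}
    (h₀ : ‖T (g - g₁)‖ ≤ r * ‖g - g₁‖) (h₁ : ‖g₁‖ ≤ K * a) (hT₁ : ‖T g₁‖ ≤ K' * a) :
    ‖T g‖ ≤ r * ‖g‖ + (r * K + K') * a :=
  calc ‖T g‖ = ‖T (g - g₁) + T g₁‖ := by rw [← map_add, sub_add_cancel]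
    _ ≤ r * ‖g - g₁‖ + K' * a := norm_add_le_of_le h₀ hT₁
    _ ≤ r * (‖g‖ + K * a) + K' * a := by gcongr; exact norm_sub_le_of_le le_rfl h₁
    _ = r * ‖g‖ + (r * K + K') * a := by ring

theorem stmt1_general {Bw Bs : Type*}
    [NormedAddCommGroup Bw] [NormedSpace ℝ Bw]
    [NormedAddCommGroup Bs] [NormedSpace ℝ Bs]
    (ι : Bs →L[ℝ] Bw)
    (L : Bw →L[ℝ] Bw)
    (Ls : Bs →ₗ[ℝ] Bs) (hLs : ∀ g, ι (Ls g) = L (ι g))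
    (C : ℝ) (hC : ∀ n : ℕ, ‖(L ^ n : Bw →L[ℝ] Bw)‖ ≤ C)
    (W0 W1 : Submodule ℝ Bw) (hcompl : IsCompl W0 W1)
    (Q q : ℝ) (hQ : 0 ≤ Q) (hq0 : 0 ≤ q) (hq1 : q < 1)
    (hcontr : ∀ (n : ℕ) (g : Bs), ι g ∈ W0 → ‖(Ls ^ n) g‖ ≤ Q * q ^ n * ‖g‖)
    (d : ℕ) (v : Fin d → Bw)
    (hspan : W1 = Submodule.span ℝ (Set.range v))
    (heig : ∀ i, ∃ c : ℝ, |c| = 1 ∧ L (v i) = c • v i)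
    (hW1s : ∀ x ∈ W1, ∃ g : Bs, ι g = x) :
    ∃ (N : ℕ) (r R : ℝ), r < 1 ∧ ∀ g : Bs, ‖(Ls ^ N) g‖ ≤ r * ‖g‖ + R * ‖ι g‖ := by
  obtain ⟨σ, hσ⟩ : ∃ σ : W1 →ₗ[ℝ] Bs, ∀ x, ι (σ x) = x :=
    (ι : Bs →ₗ[ℝ] Bw).exists_lift_of_le_range hW1s
  have : FiniteDimensional ℝ W1 := hspan ▸ FiniteDimensional.span_of_finite ℝ (Set.finite_range v)
  obtain ⟨N, hN⟩ : ∃ N : ℕ, Q * q ^ N < 1 :=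
    (((tendsto_pow_atTop_nhds_zero_of_lt_one hq0 hq1).const_mul Q).eventually
      (gt_mem_nhds (by simp))).exists
  set r := Q * q ^ N
  set K := ‖LinearMap.toContinuousLinearMap σ‖
  set K' := ‖LinearMap.toContinuousLinearMap ((Ls ^ N) ∘ₗ σ)‖
  refine ⟨N, r, (r * K + K') * C, hN, fun g => ?_⟩
  set x := W1.projectionOnto W0 hcompl.symm (ι g)
  have hg₀ : ι (g - σ x) ∈ W0 := by
    rw [map_sub, hσ, W1.coe_projectionOnto_apply]
    exact W1.sub_projection_mem hcompl.symm (ι g)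
  have hx : ‖x‖ ≤ C * ‖ι g‖ := by
    have hfix : (L ^ 2) (ι (σ x)) = ι (σ x) := by
      rw [hσ]; exact L.sq_apply_eq_self_of_abs_eigenvalue_eq_one v heig _ (hspan ▸ x.2)
    simpa [hσ] using norm_le_of_sub_mem_of_contracting ι L Ls hLs hC hq0 hq1 hcontr hg₀ hfix
  have hσx : ‖σ x‖ ≤ K * (C * ‖ι g‖) :=
    ((LinearMap.toContinuousLinearMap σ).le_opNorm x).trans (by gcongr)
  have hLσx : ‖(Ls ^ N) (σ x)‖ ≤ K' * (C * ‖ι g‖) :=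
    ((LinearMap.toContinuousLinearMap ((Ls ^ N) ∘ₗ σ)).le_opNorm x).trans (by gcongr)
  rw [mul_assoc (r * K + K')]
  exact (Ls ^ N).norm_apply_le_of_sub_of_le (by positivity) (hcontr N _ hg₀) hσx hLσx

/-- Lemma 2.5: if `Bw = Bw⁰ ⊕ Bw¹` with `L`-invariant subspaces, `L` contracts
exponentially on `Bs ∩ Bw⁰`, the iterates of `L` are uniformly bounded on `Bw`, and `L`
restricted to the finite-dimensional subspace `Bw¹ ⊆ Bs` is diagonalizable with unit spectrum
(a basis `v` of eigenvectors whose eigenvalues have modulus 1), then some iterate of `L`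
satisfies a Lasota–Yorke inequality on `Bs`. -/
theorem stmt1 {Bw Bs : Type*}
    [NormedAddCommGroup Bw] [NormedSpace ℝ Bw] [CompleteSpace Bw]
    [NormedAddCommGroup Bs] [NormedSpace ℝ Bs] [CompleteSpace Bs]
    (ι : Bs →L[ℝ] Bw) (hι : Function.Injective ι)
    (L : Bw →L[ℝ] Bw)
    (Ls : Bs →ₗ[ℝ] Bs) (hLs : ∀ g, ι (Ls g) = L (ι g))
    (C : ℝ) (hC : ∀ n : ℕ, ‖(L ^ n : Bw →L[ℝ] Bw)‖ ≤ C)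
    (W0 W1 : Submodule ℝ Bw) (hcompl : IsCompl W0 W1)
    (hW0inv : ∀ x ∈ W0, L x ∈ W0) (hW1inv : ∀ x ∈ W1, L x ∈ W1)
    (Q q : ℝ) (hQ : 0 ≤ Q) (hq0 : 0 ≤ q) (hq1 : q < 1)
    (hcontr : ∀ (n : ℕ) (g : Bs), ι g ∈ W0 → ‖(Ls ^ n) g‖ ≤ Q * q ^ n * ‖g‖)
    (d : ℕ) (v : Fin d → Bw)
    (hspan : W1 = Submodule.span ℝ (Set.range v))
    (hindep : LinearIndependent ℝ v)
    (heig : ∀ i, ∃ c : ℝ, |c| = 1 ∧ L (v i) = c • v i)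
    (hW1s : ∀ x ∈ W1, ∃ g : Bs, ι g = x) :
    ∃ (N : ℕ) (r R : ℝ), r < 1 ∧ ∀ g : Bs, ‖(Ls ^ N) g‖ ≤ r * ‖g‖ + R * ‖ι g‖ :=
  stmt1_general ι L Ls hLs C hC W0 W1 hcompl Q q hQ hq0 hq1 hcontr d v hspan heig hW1s
end

section
/- Let B_s ⊆ B_w be normed spaces of signed measures with ‖·‖_w ≤ ‖·‖_s, and let L : B_w → B_w be a linear operator preserving B_s. Suppose: (i) ‖L μ‖_w ≤ ‖μ‖_w for all μ ∈ B_s (weak contraction); (ii) there exist A, B₂ > 0 and 0 < λ < 1 with ‖Lⁿ μ‖_s ≤ A λⁿ ‖μ‖_s + B₂ ‖μ‖_w for all n ≥ 1 and μ ∈ B_s (Lasota–Yorke); (iii) there exist D₂ > 0 and 0 < β₁ < 1 with ‖Lⁿ μ‖_w ≤ D₂ β₁ⁿ ‖μ‖_s for all μ in the subspace V_s of zero-average measures in B_s (convergence to equilibrium), and V_s is L-invariant. Then there exist K₁ > 0 and 0 < ξ < 1 such that ‖Lⁿ μ‖_s ≤ K₁ ξⁿ ‖μ‖_s for all n ≥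 1 and all μ ∈ V_s; one can take ξ = √(max{λ, β₁}). -/
/-!
Split `n = m + k` with `k = ⌊n/2⌋`. The Lasota–Yorke inequality with `n = k` and `w ≤ ‖·‖` shows
that the powers of `L` are uniformly bounded in the strong norm, so `ν = Lᵏ μ` has `‖ν‖ ≲ ‖μ‖`,
while convergence to equilibrium gives `w ν ≲ β₁ᵏ ‖μ‖`. Applying Lasota–Yorke once more to `Lᵐ ν`
yields `‖Lⁿ μ‖ ≲ (λᵐ + β₁ᵏ) ‖μ‖`, and both `m` and `k` are at least about `n/2`, whence the rate
`√(max λ β₁)`. The strong norm is the norm of `B`, the weak norm is `w`.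
-/

open Real

lemma pow_le_sqrt_pow {a ρ : ℝ} {m n : ℕ} (ha : 0 ≤ a) (haρ : a ≤ ρ) (hρ1 : ρ ≤ 1)
    (hnm : n ≤ 2 * m) : a ^ m ≤ √ρ ^ n :=
  calc a ^ m ≤ ρ ^ m := pow_le_pow_left₀ ha haρ m
    _ = √ρ ^ (2 * m) := by rw [pow_mul, sq_sqrt (ha.trans haρ)]
    _ ≤ √ρ ^ n := pow_le_pow_of_le_one (sqrt_nonneg ρ) (sqrt_le_one.2 hρ1) hnm

section LasotaYorke

variable {B : Type*} [NormedAddCommGroup B] [NormedSpace ℝ B]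
  {w : B → ℝ} {L : B →ₗ[ℝ] B} {A B₂ lam : ℝ}

lemma norm_pow_apply_le_of_lasotaYorke (hA : 0 ≤ A) (hB₂ : 0 ≤ B₂) (hlam0 : 0 ≤ lam)
    (hlam1 : lam ≤ 1) (hws : ∀ μ, w μ ≤ ‖μ‖)
    (hLY : ∀ n : ℕ, 1 ≤ n → ∀ μ, ‖(L ^ n) μ‖ ≤ A * lam ^ n * ‖μ‖ + B₂ * w μ)
    (k : ℕ) (μ : B) : ‖(L ^ k) μ‖ ≤ max 1 (A + B₂) * ‖μ‖ := by
  rcases Nat.eq_zero_or_pos k with rfl | hk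
  · simpa using le_mul_of_one_le_left (norm_nonneg μ) (le_max_left 1 (A + B₂))
  calc ‖(L ^ k) μ‖ ≤ A * lam ^ k * ‖μ‖ + B₂ * w μ := hLY k hk μ
    _ ≤ A * 1 * ‖μ‖ + B₂ * ‖μ‖ := by
        gcongr
        exacts [pow_le_one₀ hlam0 hlam1, hws μ]
    _ = (A + B₂) * ‖μ‖ := by ring
    _ ≤ max 1 (A + B₂) * ‖μ‖ := by gcongr; exact le_max_right _ _

lemma norm_pow_apply_le_of_lasotaYorke_of_weak_decay (hA : 0 ≤ A) (hB₂ : 0 ≤ B₂)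
    (hlam0 : 0 ≤ lam) (hlam1 : lam ≤ 1) (hws : ∀ μ, w μ ≤ ‖μ‖)
    (hLY : ∀ n : ℕ, 1 ≤ n → ∀ μ, ‖(L ^ n) μ‖ ≤ A * lam ^ n * ‖μ‖ + B₂ * w μ)
    {D₂ β₁ : ℝ} (hD₂ : 0 ≤ D₂) (hβ₁0 : 0 < β₁) (hβ₁1 : β₁ ≤ 1) {μ : B}
    (hdecay : ∀ k : ℕ, w ((L ^ k) μ) ≤ D₂ * β₁ ^ k * ‖μ‖) {n : ℕ} (hn : 1 ≤ n) :
    ‖(L ^ n) μ‖ ≤ (A * max 1 (A + B₂) + B₂ * D₂ / √(max lam β₁)) * √(max lam β₁) ^ n * ‖μ‖ := by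
  set ξ := √(max lam β₁)
  have hξ0 : 0 < ξ := sqrt_pos.2 (lt_max_of_lt_right hβ₁0)
  have hρ1 : max lam β₁ ≤ 1 := max_le hlam1 hβ₁1
  set k := n / 2
  set m := n - k
  have hsplit : (L ^ n) μ = (L ^ m) ((L ^ k) μ) := by
    rw [← Module.End.mul_apply, ← pow_add, Nat.sub_add_cancel (Nat.div_le_self n 2)]
  have hlam_pow : lam ^ m ≤ ξ ^ n := pow_le_sqrt_pow hlam0 (le_max_left _ _) hρ1 (by omega)
  have hβ₁_pow : β₁ ^ k ≤ ξ ^ n / ξ := by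
    rw [le_div_iff₀ hξ0]
    calc β₁ ^ k * ξ ≤ ξ ^ (n - 1) * ξ := by
          gcongr
          exact pow_le_sqrt_pow hβ₁0.le (le_max_right _ _) hρ1 (by omega)
      _ = ξ ^ n := by rw [← pow_succ, Nat.sub_add_cancel hn]
  rw [hsplit]
  calc ‖(L ^ m) ((L ^ k) μ)‖ ≤ A * lam ^ m * ‖(L ^ k) μ‖ + B₂ * w ((L ^ k) μ) :=
        hLY m (by omega) _
    _ ≤ A * ξ ^ n * (max 1 (A + B₂) * ‖μ‖) + B₂ * (D₂ * (ξ ^ n / ξ) * ‖μ‖) := by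
        gcongr
        · exact norm_pow_apply_le_of_lasotaYorke hA hB₂ hlam0 hlam1 hws hLY k μ
        · exact (hdecay k).trans (by gcongr)
    _ = (A * max 1 (A + B₂) + B₂ * D₂ / ξ) * ξ ^ n * ‖μ‖ := by ring

end LasotaYorke

theorem stmt7_general {B : Type*} [NormedAddCommGroup B] [NormedSpace ℝ B]
    (w : B → ℝ) (hws : ∀ μ, w μ ≤ ‖μ‖)
    (L : B →ₗ[ℝ] B)
    (A B₂ lam : ℝ) (hA : 0 < A) (hB₂ : 0 < B₂) (hlam0 : 0 < lam) (hlam1 : lam < 1)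
    (hLY : ∀ (n : ℕ), 1 ≤ n → ∀ μ, ‖(L ^ n) μ‖ ≤ A * lam ^ n * ‖μ‖ + B₂ * w μ)
    (Vs : Submodule ℝ B)
    (D₂ β₁ : ℝ) (hD₂ : 0 < D₂) (hβ₁0 : 0 < β₁) (hβ₁1 : β₁ < 1)
    (hconv : ∀ μ ∈ Vs, ∀ n : ℕ, w ((L ^ n) μ) ≤ D₂ * β₁ ^ n * ‖μ‖) :
    ∃ K₁ : ℝ, 0 < K₁ ∧ 0 < Real.sqrt (max lam β₁) ∧ Real.sqrt (max lam β₁) < 1 ∧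
      ∀ (n : ℕ), 1 ≤ n → ∀ μ ∈ Vs, ‖(L ^ n) μ‖ ≤ K₁ * Real.sqrt (max lam β₁) ^ n * ‖μ‖ := by
  have hξ0 : 0 < √(max lam β₁) := sqrt_pos.2 (lt_max_of_lt_left hlam0)
  refine ⟨A * max 1 (A + B₂) + B₂ * D₂ / √(max lam β₁), by positivity, hξ0,
    by rw [sqrt_lt' one_pos, one_pow]; exact max_lt hlam1 hβ₁1, fun n hn μ hμ => ?_⟩
  exact norm_pow_apply_le_of_lasotaYorke_of_weak_decay hA.le hB₂.le hlam0.le hlam1.le hws hLY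
    hD₂.le hβ₁0 hβ₁1.le (hconv μ hμ) hn

/-- from weak contraction, a Lasota–Yorke inequality, and convergence to
equilibrium on the `L`-invariant subspace `Vs` of zero-average measures, one gets uniform
exponential contraction of `L` on `Vs` in the strong norm, with rate
`ξ = √(max {λ, β₁})`.  Here `B` carries the strong norm `‖·‖` and `w` is the weak norm,
with `w ≤ ‖·‖`. -/
theorem stmt7 {B : Type*} [NormedAddCommGroup B] [NormedSpace ℝ B]
    (w : B → ℝ) (hw0 : ∀ μ, 0 ≤ w μ) (hws : ∀ μ, w μ ≤ ‖μ‖)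
    (L : B →ₗ[ℝ] B)
    (hweak : ∀ μ, w (L μ) ≤ w μ)
    (A B₂ lam : ℝ) (hA : 0 < A) (hB₂ : 0 < B₂) (hlam0 : 0 < lam) (hlam1 : lam < 1)
    (hLY : ∀ (n : ℕ), 1 ≤ n → ∀ μ, ‖(L ^ n) μ‖ ≤ A * lam ^ n * ‖μ‖ + B₂ * w μ)
    (Vs : Submodule ℝ B) (hVinv : ∀ μ ∈ Vs, L μ ∈ Vs)
    (D₂ β₁ : ℝ) (hD₂ : 0 < D₂) (hβ₁0 : 0 < β₁) (hβ₁1 : β₁ < 1)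
    (hconv : ∀ μ ∈ Vs, ∀ n : ℕ, w ((L ^ n) μ) ≤ D₂ * β₁ ^ n * ‖μ‖) :
    ∃ K₁ : ℝ, 0 < K₁ ∧ 0 < Real.sqrt (max lam β₁) ∧ Real.sqrt (max lam β₁) < 1 ∧
      ∀ (n : ℕ), 1 ≤ n → ∀ μ ∈ Vs, ‖(L ^ n) μ‖ ≤ K₁ * Real.sqrt (max lam β₁) ^ n * ‖μ‖ :=
  stmt7_general w hws L A B₂ lam hA hB₂ hlam0 hlam1 hLY Vs D₂ β₁ hD₂ hβ₁0 hβ₁1 hconv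
end

section
/- Let M be a compact connected manifold, m₁ a Borel probability measure on M absolutely continuous with respect to Lebesgue measure, and f : M → M a local homeomorphism of degree p = deg(f) such that (f, M, m₁) is non-singular (m₁(A) = 0 implies m₁(f⁻¹(A)) = 0). Then there exists a finite family of pairwise disjoint open sets P₁, …, P_p covering M up to an m₁-null set, such that f restricted to each Pᵢ is a homeomorphism onto its image and m₁(M \ f(Pᵢ)) = 0 for every i = 1, …, p. -/
/-!
A local homeomorphism of a compact Hausdorff space is a covering map, so every point has an open
neighbourhood `U` whose preimage splits into `p` disjoint open sheets, each mapped bijectively onto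
`U`. By compactness, finitely many balls lying in such neighbourhoods cover `M`, and their radii
can be chosen so that their frontiers are `m₁`-null (only countably many radii fail). Removing from
each ball the closure of the earlier ones makes the balls disjoint and open while losing only
points of the frontiers, so their union `G` has null complement. Gluing, for each `i`, the `i`-th
sheets over these pieces gives `P i`, which `f` maps injectively onto `G`; the complement of
`⋃ i, P i` is `f ⁻¹' Gᶜ`, which is null by non-singularity.
-/

open Function MeasureTheory Metric Set Topology

section Sheets

variable {E X I J : Type*} [TopologicalSpace E]

structure IsSheetDecomposition (f : E → X) (U : Set X) (W : I → Set E) : Prop where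
  isOpen : ∀ i, IsOpen (W i)
  pairwise_disjoint : Pairwise (Disjoint on W)
  preimage_eq : f ⁻¹' U = ⋃ i, W i
  injOn : ∀ i, InjOn f (W i)
  image_eq : ∀ i, f '' W i = U

namespace IsSheetDecomposition

variable {f : E → X} {U : Set X} {W : I → Set E}

theorem subset_preimage (h : IsSheetDecomposition f U W) (i : I) : W i ⊆ f ⁻¹' U :=
  h.preimage_eq ▸ subset_iUnion W i

theorem restrict [TopologicalSpace X] (h : IsSheetDecomposition f U W) (hf : Continuous f)
    {V : Set X} (hV : IsOpen V) (hVU : V ⊆ U) :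
    IsSheetDecomposition f V (fun i ↦ W i ∩ f ⁻¹' V) where
  isOpen i := (h.isOpen i).inter (hV.preimage hf)
  pairwise_disjoint i j hij := (h.pairwise_disjoint hij).mono inter_subset_left inter_subset_left
  preimage_eq := by
    rw [← iUnion_inter, ← h.preimage_eq, inter_eq_right.2 (preimage_mono hVU)]
  injOn i := (h.injOn i).mono inter_subset_left
  image_eq i := by
    rw [image_inter_preimage, h.image_eq, inter_eq_right.2 hVU]

theorem iUnion {U : J → Set X} {W : J → I → Set E} (hU : Pairwise (Disjoint on U))
    (h : ∀ j, IsSheetDecomposition f (U j) (W j)) :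
    IsSheetDecomposition f (⋃ j, U j) (fun i ↦ ⋃ j, W j i) := by
  have index_eq {j j' i i'} {z z'} (hz : z ∈ W j i) (hz' : z' ∈ W j' i') (hzz' : f z = f z') :
      j = j' := by
    by_contra hne
    exact disjoint_left.1 (hU hne) ((h j).subset_preimage i hz)
      (hzz' ▸ (h j').subset_preimage i' hz')
  refine ⟨fun i ↦ isOpen_iUnion fun j ↦ (h j).isOpen i, ?_, ?_, ?_, ?_⟩
  · intro i i' hii'
    refine disjoint_left.2 fun z hz hz' ↦ ?_
    obtain ⟨j, hzj⟩ := mem_iUnion.1 hz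
    obtain ⟨j', hzj'⟩ := mem_iUnion.1 hz'
    obtain rfl := index_eq hzj hzj' rfl
    exact disjoint_left.1 ((h j).pairwise_disjoint hii') hzj hzj'
  · simp_rw [preimage_iUnion, (h _).preimage_eq]
    exact iUnion_comm _
  · intro i z hz z' hz' hzz'
    obtain ⟨j, hzj⟩ := mem_iUnion.1 hz
    obtain ⟨j', hzj'⟩ := mem_iUnion.1 hz'
    obtain rfl := index_eq hzj hzj' hzz'
    exact (h j).injOn i hzj hzj' hzz'
  · intro i
    simp_rw [image_iUnion, (h _).image_eq]

end IsSheetDecomposition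

theorem IsEvenlyCovered.exists_isSheetDecomposition [TopologicalSpace X] [TopologicalSpace I]
    {f : E → X} {x : X} (h : IsEvenlyCovered f x I) :
    ∃ U, x ∈ U ∧ IsOpen U ∧ ∃ W : I → Set E, IsSheetDecomposition f U W := by
  obtain ⟨_, U, hxU, hU, hfU, H, hH⟩ := h
  refine ⟨U, hxU, hU, fun i ↦ Subtype.val '' {e | (H e).2 = i}, ⟨?_, ?_, ?_, ?_, ?_⟩⟩
  · intro i
    exact hfU.isOpenMap_subtype_val _
      ((isOpen_discrete {i}).preimage (continuous_snd.comp H.continuous))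
  · intro i i' hii'
    refine disjoint_left.2 ?_
    rintro _ ⟨e, rfl, rfl⟩ ⟨e', he', hee'⟩
    obtain rfl := Subtype.ext hee'
    exact hii' he'
  · ext z
    simp
  · rintro i _ ⟨e, rfl, rfl⟩ _ ⟨e', he', rfl⟩ hee'
    have : H e = H e' := Prod.ext (Subtype.ext (by simpa [hH] using hee')) he'.symm
    exact congrArg Subtype.val (H.injective this)
  · intro i
    ext u
    constructor
    · rintro ⟨_, ⟨e, -, rfl⟩, rfl⟩
      exact e.2
    · intro hu
      refine ⟨H.symm (⟨u, hu⟩, i), ⟨_, by simp, rfl⟩, ?_⟩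
      simpa using (hH (H.symm (⟨u, hu⟩, i))).symm

end Sheets

section ClosureDisjointed

variable {X ι : Type*} [TopologicalSpace X] [LinearOrder ι] (B : ι → Set X)

/-- Unlike `disjointed`, removing closures keeps open sets open; the price is that points on the
frontiers of the `B l` may be lost. -/
def closureDisjointed (j : ι) : Set X :=
  B j \ closure (⋃ l < j, B l)

theorem closureDisjointed_subset (j : ι) : closureDisjointed B j ⊆ B j :=
  sdiff_subset

theorem isOpen_closureDisjointed {j : ι} (hB : IsOpen (B j)) : IsOpen (closureDisjointed B j) :=
  hB.sdiff isClosed_closure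

theorem pairwise_disjoint_closureDisjointed : Pairwise (Disjoint on closureDisjointed B) := by
  suffices ∀ l j, l < j → Disjoint (closureDisjointed B l) (closureDisjointed B j) from
    fun l j hlj ↦ hlj.lt_or_gt.elim (this l j) fun h ↦ (this j l h).symm
  intro l j hlj
  refine disjoint_left.2 fun z hzl hzj ↦ hzj.2 (subset_closure ?_)
  exact mem_biUnion hlj (closureDisjointed_subset B l hzl)

theorem iUnion_diff_iUnion_closureDisjointed_subset [Finite ι] (hB : ∀ j, IsOpen (B j)) :
    (⋃ j, B j) \ ⋃ j, closureDisjointed B j ⊆ ⋃ j, frontier (B j) := by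
  rintro z ⟨hz, hzA⟩
  obtain ⟨j, hzj, hmin⟩ := WellFounded.has_min wellFounded_lt {j | z ∈ B j} (mem_iUnion.1 hz)
  have hzc : z ∈ closure (⋃ l < j, B l) := by
    by_contra h
    exact hzA (mem_iUnion.2 ⟨j, hzj, h⟩)
  rw [show (⋃ l < j, B l) = ⋃ l ∈ Iio j, B l from rfl, (toFinite _).closure_biUnion] at hzc
  obtain ⟨l, hlj, hzl⟩ := mem_iUnion₂.1 hzc
  refine mem_iUnion.2 ⟨l, ?_⟩
  rw [frontier, (hB l).interior_eq]
  exact ⟨hzl, fun h ↦ hmin l h hlj⟩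

end ClosureDisjointed

theorem CompactSpace.exists_fin_cover {X : Type*} [TopologicalSpace X] [CompactSpace X]
    {U : X → Set X} (hU : ∀ x, U x ∈ 𝓝 x) : ∃ (n : ℕ) (c : Fin n → X), ⋃ j, U (c j) = univ := by
  obtain ⟨t, ht⟩ := finite_cover_nhds hU
  obtain ⟨n, c, hc⟩ := t.finite_toSet.fin_embedding
  exact ⟨n, c, by rwa [← biUnion_range, hc]⟩

section NullFrontier

variable {X : Type*} [PseudoMetricSpace X] [MeasurableSpace X] [OpensMeasurableSpace X]
  (μ : Measure X) [SFinite μ]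

theorem exists_ball_subset_null_frontier {x : X} {U : Set X} (hU : U ∈ 𝓝 x) :
    ∃ r > 0, ball x r ⊆ U ∧ μ (frontier (ball x r)) = 0 := by
  obtain ⟨ε, hε, hεU⟩ := Metric.mem_nhds_iff.1 hU
  obtain ⟨r, hr, hnull⟩ := exists_null_frontier_thickening μ {x} hε
  rw [thickening_singleton] at hnull
  exact ⟨r, hr.1, (ball_subset_ball hr.2.le).trans hεU, hnull⟩

theorem exists_pairwise_disjoint_isOpen_null_compl [CompactSpace X] {U : X → Set X}
    (hU : ∀ x, U x ∈ 𝓝 x) :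
    ∃ (n : ℕ) (c : Fin n → X) (A : Fin n → Set X), (∀ j, IsOpen (A j)) ∧
      Pairwise (Disjoint on A) ∧ (∀ j, A j ⊆ U (c j)) ∧ μ (⋃ j, A j)ᶜ = 0 := by
  choose r hr hrU hrnull using fun x ↦ exists_ball_subset_null_frontier μ (hU x)
  obtain ⟨n, c, hc⟩ := CompactSpace.exists_fin_cover fun x ↦ ball_mem_nhds x (hr x)
  set B : Fin n → Set X := fun j ↦ ball (c j) (r (c j))
  have hlost := iUnion_diff_iUnion_closureDisjointed_subset B fun _ ↦ isOpen_ball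
  rw [hc, ← compl_eq_univ_sdiff] at hlost
  exact ⟨n, c, closureDisjointed B, fun _ ↦ isOpen_closureDisjointed B isOpen_ball,
    pairwise_disjoint_closureDisjointed B, fun j ↦ (closureDisjointed_subset B j).trans (hrU _),
    measure_mono_null hlost (measure_iUnion_null fun _ ↦ hrnull _)⟩

end NullFrontier

theorem IsCoveringMap.isEvenlyCovered_fin {E X : Type*} [TopologicalSpace E] [TopologicalSpace X]
    {f : E → X} (hf : IsCoveringMap f) {x : X} {p : ℕ} (hp : 0 < p)
    (hdeg : Nat.card (f ⁻¹' {x}) = p) : IsEvenlyCovered f x (Fin p) :=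
  have := (hf x).discreteTopology_fiber
  (hf x).of_fiber_homeomorph
    ((Nat.equivFinOfCardPos (hdeg ▸ hp.ne')).trans (finCongr hdeg)).toHomeomorphOfDiscrete

theorem stmt11_general {M : Type*} [MetricSpace M] [CompactSpace M]
    [MeasurableSpace M] [BorelSpace M]
    (m₁ : Measure M) [IsProbabilityMeasure m₁]
    (f : M → M) (hf : IsLocalHomeomorph f)
    (p : ℕ) (hp : 0 < p) (hdeg : ∀ x : M, Nat.card (f ⁻¹' {x}) = p)
    (hns : ∀ A : Set M, MeasurableSet A → m₁ A = 0 → m₁ (f ⁻¹' A) = 0) :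
    ∃ P : Fin p → Set M,
      (∀ i, IsOpen (P i)) ∧
      Pairwise (Function.onFun Disjoint P) ∧
      m₁ (Set.univ \ ⋃ i, P i) = 0 ∧
      ∀ i, Set.InjOn f (P i) ∧ IsOpen (f '' P i) ∧ m₁ (Set.univ \ f '' P i) = 0 := by
  have hcov : IsCoveringMap f := isLocalHomeomorph_iff_isCoveringMap.1 hf
  choose U hxU hU W hW using fun x ↦
    (hcov.isEvenlyCovered_fin hp (hdeg x)).exists_isSheetDecomposition
  obtain ⟨n, c, A, hA, hAdisj, hAU, hAnull⟩ :=
    exists_pairwise_disjoint_isOpen_null_compl m₁ fun x ↦ (hU x).mem_nhds (hxU x)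
  have hP := IsSheetDecomposition.iUnion hAdisj fun j ↦
    (hW (c j)).restrict hf.continuous (hA j) (hAU j)
  have hG : IsOpen (⋃ j, A j) := isOpen_iUnion hA
  refine ⟨_, hP.isOpen, hP.pairwise_disjoint, ?_, fun i ↦ ⟨hP.injOn i, ?_, ?_⟩⟩
  · rw [← hP.preimage_eq, ← compl_eq_univ_sdiff, ← preimage_compl]
    exact hns _ hG.measurableSet.compl hAnull
  · rwa [hP.image_eq]
  · rwa [hP.image_eq, ← compl_eq_univ_sdiff]

/-- Lemma 2.3: if `f` is a local homeomorphism of degree `p` of a compact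
connected manifold `M`, and `(f, M, m₁)` is non-singular with `m₁` a Borel probability
absolutely continuous with respect to Lebesgue (a reference measure `leb`), then there are
pairwise disjoint open sets `P 1, …, P p` covering `M` up to an `m₁`-null set such that `f`
restricted to each `P i` is a homeomorphism onto its (open) image and
`m₁ (M \ f '' P i) = 0` for every `i`. -/
theorem stmt11 {M : Type*} [MetricSpace M] [CompactSpace M] [ConnectedSpace M] [Nonempty M]
    [MeasurableSpace M] [BorelSpace M]
    (leb m₁ : Measure M) [IsProbabilityMeasure m₁] (hac : m₁ ≪ leb)
    (f : M → M) (hf : IsLocalHomeomorph f)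
    (p : ℕ) (hp : 0 < p) (hdeg : ∀ x : M, Nat.card (f ⁻¹' {x}) = p)
    (hns : ∀ A : Set M, MeasurableSet A → m₁ A = 0 → m₁ (f ⁻¹' A) = 0) :
    ∃ P : Fin p → Set M,
      (∀ i, IsOpen (P i)) ∧
      Pairwise (Function.onFun Disjoint P) ∧
      m₁ (Set.univ \ ⋃ i, P i) = 0 ∧
      ∀ i, Set.InjOn f (P i) ∧ IsOpen (f '' P i) ∧ m₁ (Set.univ \ f '' P i) = 0 :=
  stmt11_general m₁ f hf p hp hdeg hns
end

section
/- Let F(x,z) = (f(x), G(x,z)) be a skew product on Σ = M × K where f has inverse branches with Jacobian weights ρᵢ satisfying Σᵢ ρᵢ(γᵢ) = 1 (m₁ is f-invariant), and suppose G(x, ·) : K → K is an α-contraction for m₁-a.e. x. If μ ∈ L^∞ (i.e. the leafwise restrictions μ|_γ have essentially bounded W-norm), then ‖F_* μ‖_∞ ≤ ‖μ‖_∞, where ‖μ‖_∞ := ess sup_γ ‖μ|_γ‖_W. -/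
open MeasureTheory

/-- The Wasserstein–Kantorovich-like norm `‖μ‖_W` of a signed measure on `K`. -/
noncomputable def Wnorm {K : Type*} [MetricSpace K] [MeasurableSpace K] (ζ : ℝ)
    (μ : SignedMeasure K) : ℝ :=
  sSup { r : ℝ | ∃ g : K → ℝ, (∀ x, |g x| ≤ 1) ∧
    (∀ x y, |g x - g y| ≤ dist x y ^ ζ) ∧
    r = |(∫ x, g x ∂μ.toJordanDecomposition.posPart) -
          ∫ x, g x ∂μ.toJordanDecomposition.negPart| }

set_option linter.unusedSectionVars false
set_option linter.unusedVariables false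

section Aux

variable {K : Type*} [MetricSpace K] [CompactSpace K] [MeasurableSpace K] [BorelSpace K]

lemma tf_continuous {ζ : ℝ} (hζ0 : 0 < ζ) {g : K → ℝ} (hg : ∀ x y, |g x - g y| ≤ dist x y ^ ζ) :
    Continuous g := by
  rw [Metric.continuous_iff]
  intro b ε hε
  refine ⟨ε ^ ζ⁻¹, Real.rpow_pos_of_pos hε _, fun a ha => ?_⟩
  calc dist (g a) (g b) = |g a - g b| := Real.dist_eq _ _
    _ ≤ dist a b ^ ζ := hg a b
    _ < (ε ^ ζ⁻¹) ^ ζ := Real.rpow_lt_rpow dist_nonneg ha hζ0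
    _ = ε := Real.rpow_inv_rpow hε.le hζ0.ne'

omit [MetricSpace K] [CompactSpace K] [BorelSpace K] in
lemma integrable_of_bdd {g : K → ℝ} (hgm : Measurable g) (hgb : ∀ x, |g x| ≤ 1)
    (μ : Measure K) [IsFiniteMeasure μ] : Integrable g μ := by
  refine (integrable_const (1 : ℝ)).mono' hgm.aestronglyMeasurable ?_
  filter_upwards with x using by simpa using hgb x

/-- The defining set of `Wnorm`. -/
def Wset (ζ : ℝ) (μ : SignedMeasure K) : Set ℝ :=
  { r : ℝ | ∃ g : K → ℝ, (∀ x, |g x| ≤ 1) ∧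
    (∀ x y, |g x - g y| ≤ dist x y ^ ζ) ∧
    r = |(∫ x, g x ∂μ.toJordanDecomposition.posPart) -
          ∫ x, g x ∂μ.toJordanDecomposition.negPart| }

lemma Wnorm_eq (ζ : ℝ) (μ : SignedMeasure K) : Wnorm ζ μ = sSup (Wset ζ μ) := rfl

lemma Wset_bddAbove (ζ : ℝ) (μ : SignedMeasure K) : BddAbove (Wset ζ μ) := by
  refine ⟨(μ.toJordanDecomposition.posPart Set.univ).toReal +
    (μ.toJordanDecomposition.negPart Set.univ).toReal, fun r hr => ?_⟩
  obtain ⟨g, hgb, -, rfl⟩ := hr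
  have h1 : ‖∫ x, g x ∂μ.toJordanDecomposition.posPart‖ ≤
      1 * (μ.toJordanDecomposition.posPart Set.univ).toReal :=
    norm_integral_le_of_norm_le_const (by filter_upwards with x using by simpa using hgb x)
  have h2 : ‖∫ x, g x ∂μ.toJordanDecomposition.negPart‖ ≤
      1 * (μ.toJordanDecomposition.negPart Set.univ).toReal :=
    norm_integral_le_of_norm_le_const (by filter_upwards with x using by simpa using hgb x)
  calc |(∫ x, g x ∂μ.toJordanDecomposition.posPart) -
          ∫ x, g x ∂μ.toJordanDecomposition.negPart|
      ≤ |∫ x, g x ∂μ.toJordanDecomposition.posPart| +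
        |∫ x, g x ∂μ.toJordanDecomposition.negPart| := abs_sub _ _
    _ ≤ _ := by rw [Real.norm_eq_abs] at h1 h2; linarith

lemma zero_mem_Wset (ζ : ℝ) (μ : SignedMeasure K) : (0 : ℝ) ∈ Wset ζ μ :=
  ⟨fun _ => 0, fun x => by simp, fun x y => by
    simpa using Real.rpow_nonneg dist_nonneg ζ, by simp⟩

lemma Wnorm_nonneg (ζ : ℝ) (μ : SignedMeasure K) : 0 ≤ Wnorm ζ μ :=
  le_csSup (Wset_bddAbove ζ μ) (zero_mem_Wset ζ μ)

lemma abs_le_Wnorm (ζ : ℝ) (μ : SignedMeasure K) {g : K → ℝ} (hgb : ∀ x, |g x| ≤ 1)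
    (hgh : ∀ x y, |g x - g y| ≤ dist x y ^ ζ) :
    |(∫ x, g x ∂μ.toJordanDecomposition.posPart) -
      ∫ x, g x ∂μ.toJordanDecomposition.negPart| ≤ Wnorm ζ μ :=
  le_csSup (Wset_bddAbove ζ μ) ⟨g, hgb, hgh, rfl⟩

omit [MetricSpace K] [CompactSpace K] [BorelSpace K] in
lemma sm_apply_jordan (μ : SignedMeasure K) {s : Set K} (hs : MeasurableSet s) :
    μ s = (μ.toJordanDecomposition.posPart s).toReal -
      (μ.toJordanDecomposition.negPart s).toReal := by
  conv_lhs => rw [← μ.toSignedMeasure_toJordanDecomposition]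
  rw [JordanDecomposition.toSignedMeasure, Measure.toSignedMeasure_sub_apply hs]
  rfl

omit [MetricSpace K] [CompactSpace K] [BorelSpace K] in
lemma Iint_eq (μ : SignedMeasure K) (p n : Measure K) [IsFiniteMeasure p] [IsFiniteMeasure n]
    (h : ∀ s : Set K, MeasurableSet s → μ s = (p s).toReal - (n s).toReal)
    {g : K → ℝ} (hgm : Measurable g) (hgb : ∀ x, |g x| ≤ 1) :
    (∫ x, g x ∂μ.toJordanDecomposition.posPart) -
      (∫ x, g x ∂μ.toJordanDecomposition.negPart) = (∫ x, g x ∂p) - ∫ x, g x ∂n := by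
  set P := μ.toJordanDecomposition.posPart
  set N := μ.toJordanDecomposition.negPart
  have hmeas : P + n = p + N := by
    ext s hs
    have h1 := sm_apply_jordan μ hs
    have h2 := h s hs
    have hP : P s ≠ ⊤ := measure_ne_top _ _
    have hN : N s ≠ ⊤ := measure_ne_top _ _
    have hp : p s ≠ ⊤ := measure_ne_top _ _
    have hn : n s ≠ ⊤ := measure_ne_top _ _
    simp only [Measure.add_apply]
    have h3 : (P s).toReal + (n s).toReal = (p s).toReal + (N s).toReal := by linarith
    have h4 := congrArg ENNReal.ofReal h3
    rwa [ENNReal.ofReal_add ENNReal.toReal_nonneg ENNReal.toReal_nonneg,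
      ENNReal.ofReal_add ENNReal.toReal_nonneg ENNReal.toReal_nonneg,
      ENNReal.ofReal_toReal hP, ENNReal.ofReal_toReal hn,
      ENNReal.ofReal_toReal hp, ENNReal.ofReal_toReal hN] at h4
  have hint : (∫ x, g x ∂P) + (∫ x, g x ∂n) = (∫ x, g x ∂p) + ∫ x, g x ∂N := by
    rw [← integral_add_measure (integrable_of_bdd hgm hgb P) (integrable_of_bdd hgm hgb n),
      ← integral_add_measure (integrable_of_bdd hgm hgb p) (integrable_of_bdd hgm hgb N), hmeas]
  linarith

omit [MetricSpace K] [CompactSpace K] [BorelSpace K] in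
lemma vm_sum_apply {ι : Type*} (s : Finset ι) (v : ι → SignedMeasure K) (t : Set K) :
    (∑ i ∈ s, v i) t = ∑ i ∈ s, v i t := by
  induction s using Finset.cons_induction with
  | empty => simp
  | cons a s ha ih => simp [Finset.sum_cons, VectorMeasure.add_apply, ih]

/-- Key leafwise estimate. -/
lemma Wnorm_sum_le (ζ α : ℝ) (hζ0 : 0 < ζ) (hα0 : 0 < α) (hα1 : α < 1) (d : ℕ)
    (c : Fin d → ℝ) (hc : ∀ i, 0 ≤ c i)
    (G : Fin d → K → K) (hGm : ∀ i, Measurable (G i))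
    (hGc : ∀ i z₁ z₂, dist (G i z₁) (G i z₂) ≤ α * dist z₁ z₂)
    (ν : Fin d → SignedMeasure K) :
    Wnorm ζ (∑ i, c i • (ν i).map (G i)) ≤ ∑ i, c i * Wnorm ζ (ν i) := by
  set μtot := ∑ i, c i • (ν i).map (G i) with hμtot
  have hRHS : 0 ≤ ∑ i, c i * Wnorm ζ (ν i) :=
    Finset.sum_nonneg fun i _ => mul_nonneg (hc i) (Wnorm_nonneg ζ (ν i))
  rw [Wnorm_eq]
  refine Real.sSup_le (fun r hr => ?_) hRHS
  obtain ⟨g, hgb, hgh, rfl⟩ := hr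
  have hgm : Measurable g := (tf_continuous hζ0 hgh).measurable
  set P : Measure K := ∑ i, (c i).toNNReal • ((ν i).toJordanDecomposition.posPart.map (G i))
    with hP
  set N : Measure K := ∑ i, (c i).toNNReal • ((ν i).toJordanDecomposition.negPart.map (G i))
    with hN
  have hPfin : IsFiniteMeasure P := by infer_instance
  have hNfin : IsFiniteMeasure N := by infer_instance
  -- valuewise representation
  have hrep : ∀ s : Set K, MeasurableSet s → μtot s = (P s).toReal - (N s).toReal := by
    intro s hs
    have hPs : (P s).toReal =
        ∑ i, c i * ((ν i).toJordanDecomposition.posPart (G i ⁻¹' s)).toReal := by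
      rw [hP, Measure.finset_sum_apply, ENNReal.toReal_sum]
      · refine Finset.sum_congr rfl fun i _ => ?_
        rw [Measure.coe_nnreal_smul_apply, Measure.map_apply (hGm i) hs, ENNReal.toReal_mul,
          ENNReal.coe_toReal, Real.coe_toNNReal _ (hc i)]
      · intro i _
        exact ENNReal.mul_ne_top (by simp) (measure_ne_top _ _)
    have hNs : (N s).toReal =
        ∑ i, c i * ((ν i).toJordanDecomposition.negPart (G i ⁻¹' s)).toReal := by
      rw [hN, Measure.finset_sum_apply, ENNReal.toReal_sum]
      · refine Finset.sum_congr rfl fun i _ => ?_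
        rw [Measure.coe_nnreal_smul_apply, Measure.map_apply (hGm i) hs, ENNReal.toReal_mul,
          ENNReal.coe_toReal, Real.coe_toNNReal _ (hc i)]
      · intro i _
        exact ENNReal.mul_ne_top (by simp) (measure_ne_top _ _)
    rw [hμtot, vm_sum_apply, hPs, hNs, ← Finset.sum_sub_distrib]
    refine Finset.sum_congr rfl fun i _ => ?_
    rw [VectorMeasure.smul_apply, VectorMeasure.map_apply _ (hGm i) hs,
      sm_apply_jordan (ν i) ((hGm i) hs), smul_eq_mul, mul_sub]
  rw [Iint_eq μtot P N hrep hgm hgb]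
  -- compute the difference of integrals as a sum
  have hintP : (∫ x, g x ∂P) =
      ∑ i, c i * ∫ x, g (G i x) ∂(ν i).toJordanDecomposition.posPart := by
    rw [hP, integral_finset_sum_measure (fun i _ => integrable_of_bdd hgm hgb _)]
    refine Finset.sum_congr rfl fun i _ => ?_
    rw [integral_smul_nnreal_measure, integral_map (hGm i).aemeasurable hgm.aestronglyMeasurable]
    simp [NNReal.smul_def, Real.coe_toNNReal _ (hc i)]
  have hintN : (∫ x, g x ∂N) =
      ∑ i, c i * ∫ x, g (G i x) ∂(ν i).toJordanDecomposition.negPart := by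
    rw [hN, integral_finset_sum_measure (fun i _ => integrable_of_bdd hgm hgb _)]
    refine Finset.sum_congr rfl fun i _ => ?_
    rw [integral_smul_nnreal_measure, integral_map (hGm i).aemeasurable hgm.aestronglyMeasurable]
    simp [NNReal.smul_def, Real.coe_toNNReal _ (hc i)]
  rw [hintP, hintN, ← Finset.sum_sub_distrib]
  have hterm : ∀ i : Fin d,
      |(∫ x, g (G i x) ∂(ν i).toJordanDecomposition.posPart) -
        ∫ x, g (G i x) ∂(ν i).toJordanDecomposition.negPart| ≤ Wnorm ζ (ν i) := by
    intro i
    refine abs_le_Wnorm ζ (ν i) (fun x => hgb _) (fun x y => ?_)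
    calc |g (G i x) - g (G i y)| ≤ dist (G i x) (G i y) ^ ζ := hgh _ _
      _ ≤ (α * dist x y) ^ ζ :=
          Real.rpow_le_rpow dist_nonneg (hGc i x y) hζ0.le
      _ = α ^ ζ * dist x y ^ ζ := Real.mul_rpow hα0.le dist_nonneg
      _ ≤ 1 * dist x y ^ ζ :=
          mul_le_mul_of_nonneg_right (Real.rpow_le_one hα0.le hα1.le hζ0.le)
            (Real.rpow_nonneg dist_nonneg ζ)
      _ = dist x y ^ ζ := one_mul _
  calc |∑ i, (c i * (∫ x, g (G i x) ∂(ν i).toJordanDecomposition.posPart) -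
        c i * ∫ x, g (G i x) ∂(ν i).toJordanDecomposition.negPart)|
      ≤ ∑ i, |c i * (∫ x, g (G i x) ∂(ν i).toJordanDecomposition.posPart) -
        c i * ∫ x, g (G i x) ∂(ν i).toJordanDecomposition.negPart| :=
        Finset.abs_sum_le_sum_abs _ _
    _ ≤ ∑ i, c i * Wnorm ζ (ν i) := by
        refine Finset.sum_le_sum fun i _ => ?_
        rw [← mul_sub, abs_mul, abs_of_nonneg (hc i)]
        exact mul_le_mul_of_nonneg_left (hterm i) (hc i)

end Aux

/-- Proposition 5.1: under the leafwise transfer-operator formula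
`(F_* μ)|_γ = Σᵢ ρᵢ(γᵢ) • F_{γᵢ*}(μ|_{γᵢ})` with weights `ρᵢ ≥ 0` summing to `1` and each
fiber map `Gmap i γ : K → K` an `α`-contraction, the weak norm
`‖μ‖_∞ = ess sup_γ ‖μ|_γ‖_W` is not increased: `‖F_* μ‖_∞ ≤ ‖μ‖_∞`.  Here `μleaf` is the
path `γ ↦ μ|_γ` and `Fμleaf` the path `γ ↦ (F_* μ)|_γ`; the inverse branches `branch i`
push `m₁` to a measure absolutely continuous with respect to `m₁`. -/
theorem stmt13 {M K : Type*} [MeasurableSpace M]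
    [MetricSpace K] [CompactSpace K] [MeasurableSpace K] [BorelSpace K]
    (m₁ : Measure M) [IsProbabilityMeasure m₁]
    (ζ α : ℝ) (hζ0 : 0 < ζ) (hζ1 : ζ ≤ 1) (hα0 : 0 < α) (hα1 : α < 1)
    (d : ℕ) (hd : 0 < d)
    (ρ : Fin d → M → ℝ) (hρ0 : ∀ i γ, 0 ≤ ρ i γ) (hρ1 : ∀ γ, ∑ i, ρ i γ = 1)
    (branch : Fin d → M → M) (hbm : ∀ i, Measurable (branch i))
    (habs : ∀ i, m₁.map (branch i) ≪ m₁)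
    (Gmap : Fin d → M → K → K) (hGm : ∀ i γ, Measurable (Gmap i γ))
    (hGc : ∀ i γ z₁ z₂, dist (Gmap i γ z₁) (Gmap i γ z₂) ≤ α * dist z₁ z₂)
    (μleaf Fμleaf : M → SignedMeasure K)
    (hformula : ∀ᵐ γ ∂m₁,
      Fμleaf γ = ∑ i, ρ i γ • (μleaf (branch i γ)).map (Gmap i γ)) :
    essSup (fun γ => ENNReal.ofReal (Wnorm ζ (Fμleaf γ))) m₁ ≤
      essSup (fun γ => ENNReal.ofReal (Wnorm ζ (μleaf γ))) m₁ := by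
  set C := essSup (fun γ => ENNReal.ofReal (Wnorm ζ (μleaf γ))) m₁ with hC
  by_cases hCtop : C = ⊤
  · rw [hCtop]; exact le_top
  have h1 : ∀ᵐ γ ∂m₁, ENNReal.ofReal (Wnorm ζ (μleaf γ)) ≤ C :=
    ENNReal.ae_le_essSup _
  have h2 : ∀ i, ∀ᵐ γ ∂m₁, ENNReal.ofReal (Wnorm ζ (μleaf (branch i γ))) ≤ C := by
    intro i
    have hnull : m₁ {γ | ¬ ENNReal.ofReal (Wnorm ζ (μleaf γ)) ≤ C} = 0 := ae_iff.mp h1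
    obtain ⟨t, hsub, htm, ht0⟩ := exists_measurable_superset_of_null hnull
    have hmap : m₁.map (branch i) t = 0 := habs i ht0
    rw [Measure.map_apply (hbm i) htm] at hmap
    rw [ae_iff]
    refine measure_mono_null (fun γ hγ => ?_) hmap
    exact hsub hγ
  refine essSup_le_of_ae_le C ?_
  filter_upwards [hformula, ae_all_iff.2 h2] with γ hf hb
  have hc0 : (0 : ℝ) ≤ C.toReal := ENNReal.toReal_nonneg
  have hWi : ∀ i, Wnorm ζ (μleaf (branch i γ)) ≤ C.toReal := by
    intro i
    have h := hb i
    rw [← ENNReal.ofReal_toReal hCtop] at h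
    exact (ENNReal.ofReal_le_ofReal_iff hc0).mp h
  have key := Wnorm_sum_le ζ α hζ0 hα0 hα1 d (fun i => ρ i γ) (fun i => hρ0 i γ)
    (fun i => Gmap i γ) (fun i => hGm i γ) (fun i => hGc i γ)
    (fun i => μleaf (branch i γ))
  have hW : Wnorm ζ (Fμleaf γ) ≤ C.toReal := by
    rw [hf]
    refine key.trans ?_
    calc ∑ i, ρ i γ * Wnorm ζ (μleaf (branch i γ))
        ≤ ∑ i, ρ i γ * C.toReal :=
          Finset.sum_le_sum fun i _ => mul_le_mul_of_nonneg_left (hWi i) (hρ0 i γ)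
      _ = C.toReal := by rw [← Finset.sum_mul, hρ1 γ, one_mul]
  calc ENNReal.ofReal (Wnorm ζ (Fμleaf γ)) ≤ ENNReal.ofReal C.toReal :=
        ENNReal.ofReal_le_ofReal hW
    _ = C := ENNReal.ofReal_toReal hCtop
end

section
/- Let a_n ≥ 0 satisfy a_{2l+d} ≤ α^l a_{l+d} + C b_l for d ∈ {0,1}, where b_l ≤ D r^l and a_n ≤ A for all n (with 0 < α, r < 1 and A, C, D > 0). Then there exist D₂ > 0 and 0 < β₁ < 1, with β₁ = max{√r, √α}, such that a_n ≤ D₂ β₁ⁿ for all n ≥ 1. -/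
/-!
Split `n = 2l + d`: the recursion bounds `a n` by `α^l A + C D r^l ≤ (A + C D) (β₁²)^l`, and
`β₁^(2l) ≤ β₁^(n-1)` since `2l ≥ n - 1`.
-/

lemma le_mul_pow_div_two_of_halving {a b : ℕ → ℝ} {α r q A C D : ℝ}
    (hα0 : 0 ≤ α) (hαq : α ≤ q) (hr0 : 0 ≤ r) (hrq : r ≤ q)
    (hA : 0 ≤ A) (hC : 0 ≤ C) (hD : 0 ≤ D)
    (hrec : ∀ l d : ℕ, d ≤ 1 → a (2 * l + d) ≤ α ^ l * a (l + d) + C * b l)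
    (hb : ∀ l, b l ≤ D * r ^ l) (hbd : ∀ n, a n ≤ A) (n : ℕ) :
    a n ≤ (A + C * D) * q ^ (n / 2) := by
  set l := n / 2
  have hn : 2 * l + n % 2 = n := Nat.div_add_mod n 2
  calc a n = a (2 * l + n % 2) := by rw [hn]
    _ ≤ α ^ l * a (l + n % 2) + C * b l := hrec l _ (Nat.le_of_lt_succ (Nat.mod_lt n two_pos))
    _ ≤ q ^ l * A + C * (D * q ^ l) := by
      refine add_le_add ?_ (mul_le_mul_of_nonneg_left ((hb l).trans (by gcongr)) hC)
      exact (mul_le_mul_of_nonneg_left (hbd _) (by positivity)).trans (by gcongr)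
    _ = (A + C * D) * q ^ l := by ring

lemma sq_pow_div_two_le_pow_div {β : ℝ} (hβ0 : 0 < β) (hβ1 : β ≤ 1) (n : ℕ) :
    (β ^ 2) ^ (n / 2) ≤ β ^ n / β := by
  rw [le_div_iff₀ hβ0, ← pow_mul, ← pow_succ]
  exact pow_le_pow_of_le_one hβ0.le hβ1 (by omega)

lemma le_sq_max_sqrt_left {x y : ℝ} : x ≤ max (Real.sqrt x) (Real.sqrt y) ^ 2 :=
  (Real.sqrt_le_left (le_max_of_le_left (Real.sqrt_nonneg x))).mp (le_max_left _ _)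

lemma le_sq_max_sqrt_right {x y : ℝ} : y ≤ max (Real.sqrt x) (Real.sqrt y) ^ 2 :=
  (Real.sqrt_le_left (le_max_of_le_right (Real.sqrt_nonneg y))).mp (le_max_right _ _)

theorem stmt15_general (a b : ℕ → ℝ)
    (α r A C D : ℝ) (hα0 : 0 < α) (hα1 : α < 1) (hr0 : 0 < r) (hr1 : r < 1)
    (hA : 0 < A) (hC : 0 < C) (hD : 0 < D)
    (hrec : ∀ l d : ℕ, d ≤ 1 → a (2 * l + d) ≤ α ^ l * a (l + d) + C * b l)
    (hb : ∀ l, b l ≤ D * r ^ l) (hbd : ∀ n, a n ≤ A) :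
    ∃ D₂ : ℝ, 0 < D₂ ∧ 0 < max (Real.sqrt r) (Real.sqrt α) ∧
      max (Real.sqrt r) (Real.sqrt α) < 1 ∧
      ∀ n : ℕ, 1 ≤ n → a n ≤ D₂ * max (Real.sqrt r) (Real.sqrt α) ^ n := by
  set β := max (Real.sqrt r) (Real.sqrt α)
  have hβ0 : 0 < β := lt_max_of_lt_left (Real.sqrt_pos.mpr hr0)
  have hβ1 : β < 1 := max_lt ((Real.sqrt_lt' one_pos).mpr (by rwa [one_pow]))
    ((Real.sqrt_lt' one_pos).mpr (by rwa [one_pow]))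
  refine ⟨(A + C * D) / β, by positivity, hβ0, hβ1, fun n _ => ?_⟩
  calc a n ≤ (A + C * D) * (β ^ 2) ^ (n / 2) :=
        le_mul_pow_div_two_of_halving hα0.le le_sq_max_sqrt_right hr0.le
          le_sq_max_sqrt_left hA.le hC.le hD.le hrec hb hbd n
    _ ≤ (A + C * D) * (β ^ n / β) := by gcongr; exact sq_pow_div_two_le_pow_div hβ0 hβ1.le n
    _ = (A + C * D) / β * β ^ n := by ring

/-- abstract form of Proposition 5.8: if `a (2l+d) ≤ α^l a (l+d) + C b l` for
`d ∈ {0,1}`, with `b l ≤ D r^l` and `a n ≤ A` uniformly, then `a n ≤ D₂ β₁ⁿ` for all `n ≥ 1`,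
where `β₁ = max {√r, √α}`. -/
theorem stmt15 (a b : ℕ → ℝ) (ha0 : ∀ n, 0 ≤ a n)
    (α r A C D : ℝ) (hα0 : 0 < α) (hα1 : α < 1) (hr0 : 0 < r) (hr1 : r < 1)
    (hA : 0 < A) (hC : 0 < C) (hD : 0 < D)
    (hrec : ∀ l d : ℕ, d ≤ 1 → a (2 * l + d) ≤ α ^ l * a (l + d) + C * b l)
    (hb : ∀ l, b l ≤ D * r ^ l) (hbd : ∀ n, a n ≤ A) :
    ∃ D₂ : ℝ, 0 < D₂ ∧ 0 < max (Real.sqrt r) (Real.sqrt α) ∧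
      max (Real.sqrt r) (Real.sqrt α) < 1 ∧
      ∀ n : ℕ, 1 ≤ n → a n ≤ D₂ * max (Real.sqrt r) (Real.sqrt α) ^ n :=
  stmt15_general a b α r A C D hα0 hα1 hr0 hr1 hA hC hD hrec hb hbd
end
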